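/- Let L ≥ 2, r ≥ 0, K ≥ 1, and let D = {(x_i, y_i)}_{i=1}^n (n ≥ 1, x_i ∈ ℝ^d, y_i ∈ [K]) be r-separated with respect to the ℓ∞-norm, with every label in [K] attained by some sample. Then there exist layer widths n_0 = d, n_L = K, and n_l ≤ ⌈n/(L−1)⌉ + K + 2d for 1 ≤ l ≤ L−1, together with parameters w^(l,i) ∈ ℝ^{n_{l−1}}, b^(l)_i ∈ ℝ, such that the L-layer ℓ∞-distance net g = F_L ∘ ⋯ ∘ F_1 (where F_l(z)_i = ‖z − w^(l,i)‖∞ + b^(l)_i) satisfies: for every k ∈ [n], every δ ∈ ℝ^d with ‖δ‖∞ ≤ r, and every j ≠ y_k, g(x_k + δ)_{y_k} > g(x_k + δ)_j. In particular an L-layer ℓ∞-distance net with hidden size at most ⌈n/(L−1)⌉ + K + 2d achieves 100% certified ℓ∞ robust accuracy on D under perturbation level ε = r. -/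

import Mathlib

/-!
An ℓ∞-distance neuron `u ↦ ‖u - w‖ + b` returns `max_i |u_i - w_i| + b`. Let `X` bound `‖z‖` and
every `‖x_i‖`. If each carried value `u_i` stays within `X` of a fixed `center_i`, a neuron whose
weight equals `center` off a few active coordinates returns the maximum over the active
coordinates alone, provided that maximum is at least `X`.

Every hidden layer carries `z_j + 2X` and `2X - z_j`, so that later layers can still measure
`‖z - x_i‖ = max_j |z_j - x_ij|`; a score for each class; and `m = ⌈n/(L-1)⌉` slots
`2X + ‖z - x_i‖`, one per sample assigned to the layer. The score of class `c` at layer `l + 1` is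
the maximum of its score at layer `l` and of `3X - ‖z - x_i‖` over the class-`c` slots of layer
`l`, that is `3X - min ‖z - x_i‖` over the class-`c` samples seen so far (seeded at layer 1 by one
representative of the class). After `L - 1` layers every sample has been seen. For
`z = x_k + δ` the minimum is at most `‖δ‖ ≤ r` for the true class, and r-separation makes it
larger than `r` for every other class.
-/

/-- The composition of the first `L` layers of a network: `netComp n F L = F_{L-1} ∘ ⋯ ∘ F_0`,
where layer `F_l` maps `ℝ^{n l}` to `ℝ^{n (l+1)}`. -/
def netComp (nl : ℕ → ℕ) (F : ∀ l : ℕ, (Fin (nl l) → ℝ) → (Fin (nl (l + 1)) → ℝ)) :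
    (L : ℕ) → (Fin (nl 0) → ℝ) → (Fin (nl L) → ℝ)
  | 0 => id
  | (L + 1) => fun x => F L (netComp nl F L x)

open Finset

namespace LinfDistNet

lemma norm_sub_eq_of_abs_sub_le {ι : Type*} [Fintype ι] {v c w : ι → ℝ} {X a : ℝ}
    (hvc : ∀ i, |v i - c i| ≤ X) (hXa : X ≤ a) (hw : ∀ i, w i ≠ c i → |v i - w i| ≤ a)
    (i₀ : ι) (h₀ : |v i₀ - w i₀| = a) : ‖v - w‖ = a := by
  have ha : 0 ≤ a := h₀ ▸ abs_nonneg _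
  refine le_antisymm ((pi_norm_le_iff_of_nonneg ha).2 fun i => ?_) ?_
  · rw [Pi.sub_apply, Real.norm_eq_abs]
    by_cases hi : w i = c i
    · exact hi ▸ (hvc i).trans hXa
    · exact hw i hi
  · simpa [h₀] using norm_le_pi_norm (v - w) i₀

lemma norm_sub_update_eq {ι : Type*} [Fintype ι] [DecidableEq ι] {v c : ι → ℝ} {X t a : ℝ}
    (hvc : ∀ i, |v i - c i| ≤ X) (o : ι) (h₀ : |v o - t| = a) (hXa : X ≤ a) :
    ‖v - Function.update c o t‖ = a := by
  refine norm_sub_eq_of_abs_sub_le hvc hXa (fun i hi => ?_) o (by simpa using h₀)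
  obtain rfl : i = o := by_contra fun h => hi (Function.update_of_ne h _ _)
  simpa using h₀.le

lemma abs_apply_le_of_norm_le {ι : Type*} [Fintype ι] {v : ι → ℝ} {X : ℝ} (hv : ‖v‖ ≤ X)
    (i : ι) : |v i| ≤ X :=
  (Real.norm_eq_abs (v i) ▸ norm_le_pi_norm v i).trans hv

lemma norm_sub_le_two_mul {E : Type*} [SeminormedAddCommGroup E] {a b : E} {X : ℝ}
    (ha : ‖a‖ ≤ X) (hb : ‖b‖ ≤ X) : ‖a - b‖ ≤ 2 * X := by
  linarith [norm_sub_le a b]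

lemma lt_norm_add_sub_of_two_mul_lt {E : Type*} [SeminormedAddCommGroup E] {a b δ : E} {r : ℝ}
    (hab : 2 * r < ‖a - b‖) (hδ : ‖δ‖ ≤ r) : r < ‖a + δ - b‖ := by
  have : ‖a - b‖ ≤ ‖a + δ - b‖ + ‖δ‖ := by
    simpa [add_sub_right_comm] using norm_sub_le (a + δ - b) δ
  linarith

lemma netComp_succ_eq_of_forall {nl : ℕ → ℕ}
    {F : ∀ l : ℕ, (Fin (nl l) → ℝ) → (Fin (nl (l + 1)) → ℝ)} {L : ℕ} {u : Fin (nl 0) → ℝ}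
    (V : ∀ l, Fin (nl l) → ℝ) (h₀ : F 0 u = V 1)
    (hstep : ∀ l, 1 ≤ l → l < L → F l (V l) = V (l + 1)) :
    ∀ l < L, netComp nl F (l + 1) u = V (l + 1)
  | 0, _ => h₀
  | l + 1, hl => by
    show F (l + 1) (netComp nl F (l + 1) u) = _
    rw [netComp_succ_eq_of_forall V h₀ hstep l (by omega)]
    exact hstep _ (by omega) hl

section Schedule

variable {n K : ℕ} (m : ℕ) (y : Fin n → Fin K) (rep : Fin K → Fin n)

def sample (hn : 0 < n) (l : ℕ) (q : Fin m) : Fin n :=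
  ⟨min ((l - 1) * m + q) (n - 1), by omega⟩

def seen (c : Fin K) (l : ℕ) : Finset (Fin n) :=
  insert (rep c) (univ.filter fun i => y i = c ∧ (i : ℕ) < (l - 1) * m)

variable {m y rep} {c : Fin K} {l : ℕ}

lemma seen_one : seen m y rep c 1 = {rep c} := by
  simp [seen]

lemma seen_mono : seen m y rep c l ⊆ seen m y rep c (l + 1) := by
  refine insert_subset_insert _ fun i => ?_
  simp only [mem_filter, mem_univ, true_and]
  exact fun h => ⟨h.1, h.2.trans_le (Nat.mul_le_mul_right m (by omega))⟩

lemma sample_mem_seen {hn : 0 < n} (hl : 1 ≤ l) {q : Fin m} (hc : y (sample m hn l q) = c) :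
    sample m hn l q ∈ seen m y rep c (l + 1) := by
  refine mem_insert_of_mem (mem_filter.2 ⟨mem_univ _, hc, ?_⟩)
  obtain ⟨l, rfl⟩ : ∃ l', l = l' + 1 := ⟨l - 1, by omega⟩
  have := q.isLt
  simp only [sample, Nat.add_sub_cancel, Nat.succ_mul]
  omega

lemma mem_seen_succ (hn : 0 < n) (hl : 1 ≤ l) {i : Fin n} (hi : i ∈ seen m y rep c (l + 1)) :
    i ∈ seen m y rep c l ∨ ∃ q, sample m hn l q = i ∧ y i = c := by
  rcases mem_insert.1 hi with rfl | hi
  · exact Or.inl (mem_insert_self _ _)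
  simp only [mem_filter, mem_univ, true_and, Nat.add_sub_cancel] at hi
  by_cases hlt : (i : ℕ) < (l - 1) * m
  · exact Or.inl (mem_insert_of_mem (mem_filter.2 ⟨mem_univ _, hi.1, hlt⟩))
  · obtain ⟨l, rfl⟩ : ∃ l', l = l' + 1 := ⟨l - 1, by omega⟩
    simp only [Nat.add_sub_cancel, Nat.succ_mul] at hi hlt
    refine Or.inr ⟨⟨i - l * m, by omega⟩, Fin.ext ?_, hi.1⟩
    simp only [sample, Nat.add_sub_cancel]
    omega

lemma label_eq_of_mem_seen (hrep : ∀ c, y (rep c) = c) {i : Fin n}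
    (hi : i ∈ seen m y rep c l) : y i = c := by
  rcases mem_insert.1 hi with rfl | hi
  · exact hrep c
  · exact (mem_filter.1 hi).2.1

lemma mem_seen_label (hnm : n ≤ (l - 1) * m) (i : Fin n) : i ∈ seen m y rep (y i) l :=
  mem_insert_of_mem (mem_filter.2 ⟨mem_univ _, rfl, i.isLt.trans_le hnm⟩)

end Schedule

section Distances

variable {d n K : ℕ} (m : ℕ) (y : Fin n → Fin K) (rep : Fin K → Fin n)
  (x : Fin n → Fin d → ℝ) (z : Fin d → ℝ)

def minDist (c : Fin K) (l : ℕ) : ℝ :=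
  (seen m y rep c l).inf' (insert_nonempty _ _) fun i => ‖z - x i‖

lemma exists_mem_seen_minDist_eq (c : Fin K) (l : ℕ) :
    ∃ i ∈ seen m y rep c l, minDist m y rep x z c l = ‖z - x i‖ :=
  exists_mem_eq_inf' _ _

variable {m y rep x z} {X : ℝ} {c : Fin K} {l : ℕ}

lemma minDist_le {i : Fin n} (hi : i ∈ seen m y rep c l) : minDist m y rep x z c l ≤ ‖z - x i‖ :=
  inf'_le _ hi

lemma minDist_nonneg : 0 ≤ minDist m y rep x z c l :=
  le_inf' _ _ fun _ _ => norm_nonneg _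

lemma minDist_le_two_mul (hx : ∀ i, ‖x i‖ ≤ X) (hz : ‖z‖ ≤ X) :
    minDist m y rep x z c l ≤ 2 * X :=
  (minDist_le (mem_insert_self _ _)).trans (norm_sub_le_two_mul hz (hx _))

lemma minDist_one : minDist m y rep x z c 1 = ‖z - x (rep c)‖ := by
  simp [minDist, seen_one]

lemma minDist_succ_le : minDist m y rep x z c (l + 1) ≤ minDist m y rep x z c l :=
  inf'_mono _ seen_mono _

lemma minDist_succ_eq_or (hn : 0 < n) (hl : 1 ≤ l) :
    minDist m y rep x z c (l + 1) = minDist m y rep x z c l ∨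
      ∃ q, y (sample m hn l q) = c ∧
        minDist m y rep x z c (l + 1) = ‖z - x (sample m hn l q)‖ := by
  obtain ⟨i, hi, hmin⟩ := exists_mem_seen_minDist_eq m y rep x z c (l + 1)
  rcases mem_seen_succ hn hl hi with hi | ⟨q, rfl, hc⟩
  · exact Or.inl (le_antisymm minDist_succ_le (hmin ▸ minDist_le hi))
  · exact Or.inr ⟨q, hc, hmin⟩

lemma lt_minDist_of_ne_label (hrep : ∀ c, y (rep c) = c) {r : ℝ}
    (hsep : ∀ i j, y i ≠ y j → 2 * r < ‖x i - x j‖) {k : Fin n} {δ : Fin d → ℝ} (hδ : ‖δ‖ ≤ r)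
    (hc : c ≠ y k) : r < minDist m y rep x (x k + δ) c l := by
  obtain ⟨i, hi, hmin⟩ := exists_mem_seen_minDist_eq m y rep x (x k + δ) c l
  rw [hmin]
  exact lt_norm_add_sub_of_two_mul_lt (hsep k i (label_eq_of_mem_seen hrep hi ▸ hc.symm)) hδ

end Distances

abbrev HiddenIdx (d K m : ℕ) := Fin d ⊕ Fin d ⊕ Fin K ⊕ Fin m

section Neurons

variable {d n K m : ℕ} (x : Fin n → Fin d → ℝ) (y : Fin n → Fin K) (rep : Fin K → Fin n)
  (hn : 0 < n) (X : ℝ)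

def center (l : ℕ) : HiddenIdx d K m → ℝ
  | .inl _ => 2 * X
  | .inr (.inl _) => 2 * X
  | .inr (.inr (.inl _)) => if l = 1 then 3 * X else 2 * X
  | .inr (.inr (.inr _)) => 3 * X

def value (z : Fin d → ℝ) (l : ℕ) : HiddenIdx d K m → ℝ
  | .inl j => z j + 2 * X
  | .inr (.inl j) => 2 * X - z j
  | .inr (.inr (.inl c)) =>
      if l = 1 then 2 * X + ‖z - x (rep c)‖ else 3 * X - minDist m y rep x z c l
  | .inr (.inr (.inr q)) => 2 * X + ‖z - x (sample m hn l q)‖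

def inputWeight : HiddenIdx d K m → Fin d → ℝ
  | .inl j => Function.update 0 j (-(2 * X))
  | .inr (.inl j) => Function.update 0 j (2 * X)
  | .inr (.inr (.inl c)) => x (rep c)
  | .inr (.inr (.inr q)) => x (sample m hn 1 q)

def inputBias : HiddenIdx d K m → ℝ
  | .inl _ => 0
  | .inr (.inl _) => 0
  | .inr (.inr _) => 2 * X

-- A weight `5X` turns a carried distance `2X + D` into `|2X + D - 5X| = 3X - D`.
def scoreWeight (l : ℕ) (c : Fin K) : HiddenIdx d K m → ℝ
  | o@(.inl _) => center X l o
  | o@(.inr (.inl _)) => center X l o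
  | o@(.inr (.inr (.inl c'))) => if c' = c then (if l = 1 then 5 * X else 0) else center X l o
  | o@(.inr (.inr (.inr q))) => if y (sample m hn l q) = c then 5 * X else center X l o

-- On the two copies of `z_j` the differences are `±(z_j - x_ij) - 2X`, so the largest absolute
-- value among them is `2X + ‖z - x_i‖`.
def distWeight (l : ℕ) (i : Fin n) : HiddenIdx d K m → ℝ
  | .inl j => x i j + 4 * X
  | .inr (.inl j) => 4 * X - x i j
  | o@(.inr (.inr _)) => center X l o

def hiddenWeight (l : ℕ) : HiddenIdx d K m → HiddenIdx d K m → ℝ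
  | .inl j => Function.update (center X l) (.inl j) 0
  | .inr (.inl j) => Function.update (center X l) (.inr (.inl j)) 0
  | .inr (.inr (.inl c)) => scoreWeight y hn X l c
  | .inr (.inr (.inr q)) => distWeight x X l (sample m hn (l + 1) q)

variable {x y rep hn X} {z : Fin d → ℝ}

lemma abs_value_sub_center_le (hx : ∀ i, ‖x i‖ ≤ X) (hz : ‖z‖ ≤ X) (l : ℕ) :
    ∀ o : HiddenIdx d K m, |value x y rep hn X z l o - center X l o| ≤ X
  | .inl j => by simpa [value, center] using abs_apply_le_of_norm_le hz j
  | .inr (.inl j) => by simpa [value, center] using abs_apply_le_of_norm_le hz j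
  | .inr (.inr (.inl c)) => by
    have hD := norm_sub_le_two_mul hz (hx (rep c))
    have hmin : minDist m y rep x z c l ≤ 2 * X := minDist_le_two_mul hx hz
    have hmin₀ : 0 ≤ minDist m y rep x z c l := minDist_nonneg
    simp only [value, center]
    split_ifs <;> rw [abs_le] <;> constructor <;> linarith [norm_nonneg (z - x (rep c))]
  | .inr (.inr (.inr q)) => by
    have hD := norm_sub_le_two_mul hz (hx (sample m hn l q))
    simp only [value, center]
    rw [abs_le]
    constructor <;> linarith [norm_nonneg (z - x (sample m hn l q))]

lemma norm_sub_inputWeight_add_inputBias (hz : ‖z‖ ≤ X) (o : HiddenIdx d K m) :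
    ‖z - inputWeight x rep hn X o‖ + inputBias X o = value x y rep hn X z 1 o := by
  have hvc (j : Fin d) : |z j - (0 : Fin d → ℝ) j| ≤ X := by
    simpa using abs_apply_le_of_norm_le hz j
  rcases o with j | j | c | q
  · have hzj := abs_le.1 (abs_apply_le_of_norm_le hz j)
    have h₀ : |z j - -(2 * X)| = z j + 2 * X := by
      rw [sub_neg_eq_add, abs_of_nonneg (by linarith)]
    simp only [inputWeight, inputBias, value, norm_sub_update_eq hvc j h₀ (by linarith), add_zero]
  · have hzj := abs_le.1 (abs_apply_le_of_norm_le hz j)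
    have h₀ : |z j - 2 * X| = 2 * X - z j := by
      rw [abs_sub_comm, abs_of_nonneg (by linarith)]
    simp only [inputWeight, inputBias, value, norm_sub_update_eq hvc j h₀ (by linarith), add_zero]
  · simp [inputWeight, inputBias, value, add_comm]
  · simp [inputWeight, inputBias, value, add_comm]

lemma norm_value_sub_distWeight [Nonempty (Fin d)] (hx : ∀ i, ‖x i‖ ≤ X) (hz : ‖z‖ ≤ X)
    (l : ℕ) (i : Fin n) :
    ‖value x y rep hn X z l - distWeight (m := m) x X l i‖ = 2 * X + ‖z - x i‖ := by
  have hD := norm_sub_le_two_mul hz (hx i)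
  have hcoord (j : Fin d) : |z j - x i j| ≤ ‖z - x i‖ :=
    abs_apply_le_of_norm_le (v := z - x i) le_rfl j
  have hpos (j : Fin d) : |z j + 2 * X - (x i j + 4 * X)| = 2 * X - (z j - x i j) := by
    rw [abs_sub_comm, abs_of_nonneg (by linarith [abs_le.1 (hcoord j)])]
    ring
  have hneg (j : Fin d) : |2 * X - z j - (4 * X - x i j)| = 2 * X + (z j - x i j) := by
    rw [abs_sub_comm, abs_of_nonneg (by linarith [abs_le.1 (hcoord j)])]
    ring
  have hw : ∀ o, distWeight (m := m) x X l i o ≠ center X l o →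
      |value x y rep hn X z l o - distWeight x X l i o| ≤ 2 * X + ‖z - x i‖ := by
    rintro (j | j | o) hne
    · simp only [value, distWeight, hpos]; linarith [abs_le.1 (hcoord j)]
    · simp only [value, distWeight, hneg]; linarith [abs_le.1 (hcoord j)]
    · exact absurd rfl hne
  have hXa : X ≤ 2 * X + ‖z - x i‖ := by linarith [norm_nonneg (z - x i)]
  have hvc := abs_value_sub_center_le (m := m) (y := y) (rep := rep) (hn := hn) hx hz l
  obtain ⟨j, hj⟩ := (IsGreatest.pi_norm (z - x i)).1
  replace hj : |z j - x i j| = ‖z - x i‖ := hj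
  rcases le_total (z j - x i j) 0 with hle | hge
  · refine norm_sub_eq_of_abs_sub_le hvc hXa hw (.inl j) ?_
    simp only [value, distWeight, hpos, ← hj, abs_of_nonpos hle]
    ring
  · refine norm_sub_eq_of_abs_sub_le hvc hXa hw (.inr (.inl j)) ?_
    simp only [value, distWeight, hneg, ← hj, abs_of_nonneg hge]

lemma abs_value_sub_scoreWeight_self (hx : ∀ i, ‖x i‖ ≤ X) (hz : ‖z‖ ≤ X) {l : ℕ}
    (hl : 1 ≤ l) (c : Fin K) :
    |value (m := m) x y rep hn X z l (.inr (.inr (.inl c)))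
      - scoreWeight (d := d) (m := m) y hn X l c (.inr (.inr (.inl c)))|
      = 3 * X - minDist m y rep x z c l := by
  have hX : 0 ≤ X := (norm_nonneg z).trans hz
  have hmin : minDist m y rep x z c l ≤ 2 * X := minDist_le_two_mul hx hz
  rcases eq_or_lt_of_le hl with rfl | hl
  · simp only [value, scoreWeight, if_true, minDist_one]
    rw [abs_sub_comm, abs_of_nonneg (by linarith [norm_sub_le_two_mul hz (hx (rep c))])]
    ring
  · simp only [value, scoreWeight, if_true, if_neg hl.ne', sub_zero]
    exact abs_of_nonneg (by linarith)

lemma abs_value_sub_scoreWeight_sample (hx : ∀ i, ‖x i‖ ≤ X) (hz : ‖z‖ ≤ X) {l : ℕ}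
    {c : Fin K} {q : Fin m} (hc : y (sample m hn l q) = c) :
    |value x y rep hn X z l (.inr (.inr (.inr q)))
      - scoreWeight (d := d) y hn X l c (.inr (.inr (.inr q)))|
      = 3 * X - ‖z - x (sample m hn l q)‖ := by
  have hX : 0 ≤ X := (norm_nonneg z).trans hz
  have hD := norm_sub_le_two_mul hz (hx (sample m hn l q))
  simp only [value, scoreWeight, if_pos hc]
  rw [abs_sub_comm, abs_of_nonneg (by linarith)]
  ring

lemma norm_value_sub_scoreWeight (hx : ∀ i, ‖x i‖ ≤ X) (hz : ‖z‖ ≤ X) {l : ℕ} (hl : 1 ≤ l)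
    (c : Fin K) :
    ‖value x y rep hn X z l - scoreWeight (m := m) y hn X l c‖
      = 3 * X - minDist m y rep x z c (l + 1) := by
  have hw : ∀ o, scoreWeight (d := d) (m := m) y hn X l c o ≠ center X l o →
      |value x y rep hn X z l o - scoreWeight y hn X l c o|
        ≤ 3 * X - minDist m y rep x z c (l + 1) := by
    rintro (j | j | c' | q) hne
    · exact absurd rfl hne
    · exact absurd rfl hne
    · by_cases hc : c' = c
      · subst hc
        have hmono : minDist m y rep x z c' (l + 1) ≤ minDist m y rep x z c' l := minDist_succ_le
        rw [abs_value_sub_scoreWeight_self hx hz hl]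
        linarith
      · simp [scoreWeight, hc] at hne
    · by_cases hc : y (sample m hn l q) = c
      · rw [abs_value_sub_scoreWeight_sample hx hz hc]
        linarith [minDist_le (x := x) (z := z) (sample_mem_seen (rep := rep) hl hc)]
      · simp [scoreWeight, hc] at hne
  have hXa : X ≤ 3 * X - minDist m y rep x z c (l + 1) := by
    linarith [(minDist_le_two_mul hx hz : minDist m y rep x z c (l + 1) ≤ 2 * X)]
  have hvc := abs_value_sub_center_le (m := m) (y := y) (rep := rep) (hn := hn) hx hz l
  rcases minDist_succ_eq_or (x := x) (z := z) (rep := rep) (c := c) hn hl with h | ⟨q, hq, h⟩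
  · refine norm_sub_eq_of_abs_sub_le hvc hXa hw (.inr (.inr (.inl c))) ?_
    rw [abs_value_sub_scoreWeight_self hx hz hl, h]
  · refine norm_sub_eq_of_abs_sub_le hvc hXa hw (.inr (.inr (.inr q))) ?_
    rw [abs_value_sub_scoreWeight_sample hx hz hq, h]

lemma norm_value_sub_hiddenWeight [Nonempty (Fin d)] (hx : ∀ i, ‖x i‖ ≤ X) (hz : ‖z‖ ≤ X)
    {l : ℕ} (hl : 1 ≤ l) (o : HiddenIdx d K m) :
    ‖value x y rep hn X z l - hiddenWeight x y hn X l o‖ = value x y rep hn X z (l + 1) o := by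
  have hvc := abs_value_sub_center_le (m := m) (y := y) (rep := rep) (hn := hn) hx hz l
  rcases o with j | j | c | q
  · have hzj := abs_le.1 (abs_apply_le_of_norm_le hz j)
    have h₀ : |value (m := m) x y rep hn X z l (.inl j) - 0| = z j + 2 * X := by
      rw [value, sub_zero, abs_of_nonneg (by linarith)]
    rw [hiddenWeight, norm_sub_update_eq hvc _ h₀ (by linarith), value]
  · have hzj := abs_le.1 (abs_apply_le_of_norm_le hz j)
    have h₀ : |value (m := m) x y rep hn X z l (.inr (.inl j)) - 0| = 2 * X - z j := by
      rw [value, sub_zero, abs_of_nonneg (by linarith)]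
    rw [hiddenWeight, norm_sub_update_eq hvc _ h₀ (by linarith), value]
  · rw [hiddenWeight, norm_value_sub_scoreWeight hx hz hl, value, if_neg (by omega)]
  · rw [hiddenWeight, norm_value_sub_distWeight hx hz, value]

end Neurons

section Network

variable (d K m L : ℕ)

def width (l : ℕ) : ℕ :=
  if l = 0 then d else if l < L then Fintype.card (HiddenIdx d K m) else K

-- The input and output neurons are identified with the `Fin d`-block and the class block of
-- `HiddenIdx`, so that a single weight table `layerWeight` serves every layer.
noncomputable def role (l : ℕ) : Fin (width d K m L l) → HiddenIdx d K m :=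
  if h₀ : l = 0 then fun j => .inl (Fin.cast (by simp [width, h₀]) j)
  else if hL : l < L then
    fun j => (Fintype.equivFin _).symm (Fin.cast (by simp [width, h₀, hL]) j)
  else fun c => .inr (.inr (.inl (Fin.cast (by simp [width, h₀, hL]) c)))

variable {d K m L}

lemma width_zero : width d K m L 0 = d := rfl

lemma width_self (hL : L ≠ 0) : width d K m L L = K := by
  simp [width, hL]

lemma width_le (l : ℕ) : width d K m L l ≤ m + K + 2 * d := by
  have : Fintype.card (HiddenIdx d K m) = d + (d + (K + m)) := by simp
  unfold width
  split_ifs <;> omega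

lemma role_self (hL : L ≠ 0) (c : Fin (width d K m L L)) :
    role d K m L L c = .inr (.inr (.inl (Fin.cast (width_self hL) c))) := by
  simp [role, hL]

lemma role_surjective {l : ℕ} (h₀ : l ≠ 0) (hL : l < L) :
    Function.Surjective (role d K m L l) := by
  simp only [role, h₀, hL, dite_false, dite_true]
  exact (Fintype.equivFin _).symm.surjective.comp (finCongr (by simp [width, h₀, hL])).surjective

end Network

section Evaluation

variable {d n K m : ℕ} (x : Fin n → Fin d → ℝ) (y : Fin n → Fin K) (rep : Fin K → Fin n)
  (hn : 0 < n) (X : ℝ) (L : ℕ)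

def layerWeight (l : ℕ) : HiddenIdx d K m → HiddenIdx d K m → ℝ :=
  if l = 0 then fun o => Sum.elim (inputWeight x rep hn X o) 0 else hiddenWeight x y hn X l

def layerBias (l : ℕ) : HiddenIdx d K m → ℝ :=
  if l = 0 then inputBias X else 0

noncomputable def net (l : ℕ) (u : Fin (width d K m L l) → ℝ)
    (i : Fin (width d K m L (l + 1))) : ℝ :=
  ‖u - fun j => layerWeight x y rep hn X l (role d K m L (l + 1) i) (role d K m L l j)‖
    + layerBias X l (role d K m L (l + 1) i)

variable {x y rep hn X L} {z : Fin d → ℝ}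

lemma net_zero (hz : ‖z‖ ≤ X) :
    net x y rep hn X L 0 (fun j => z (Fin.cast width_zero j))
      = value x y rep hn X z 1 ∘ role d K m L 1 := by
  funext i
  exact norm_sub_inputWeight_add_inputBias hz _

lemma net_of_pos [Nonempty (Fin d)] (hx : ∀ i, ‖x i‖ ≤ X) (hz : ‖z‖ ≤ X) {l : ℕ} (h₁ : 1 ≤ l)
    (hl : l < L) :
    net x y rep hn X L l (value x y rep hn X z l ∘ role d K m L l)
      = value x y rep hn X z (l + 1) ∘ role d K m L (l + 1) := by
  funext i
  simp only [net, layerWeight, layerBias, if_neg (by omega : l ≠ 0), Pi.zero_apply, add_zero,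
    Function.comp_apply]
  rw [← norm_value_sub_hiddenWeight hx hz h₁]
  exact (role_surjective (by omega) hl).pi_norm_comp
    (value x y rep hn X z l - hiddenWeight x y hn X l _)

lemma netComp_net_apply [Nonempty (Fin d)] (hx : ∀ i, ‖x i‖ ≤ X) (hz : ‖z‖ ≤ X) (hL : 2 ≤ L)
    (c : Fin K) :
    netComp (width d K m L) (net x y rep hn X L) L (fun j => z (Fin.cast width_zero j))
        (Fin.cast (width_self (by omega)).symm c)
      = 3 * X - minDist m y rep x z c L := by
  obtain ⟨l, rfl⟩ : ∃ l, L = l + 1 := ⟨L - 1, by omega⟩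
  rw [netComp_succ_eq_of_forall (fun k => value x y rep hn X z k ∘ role d K m (l + 1) k)
    (net_zero hz) (fun k h₁ hk => net_of_pos hx hz h₁ hk) l (by omega), Function.comp_apply,
    role_self (by omega), value, if_neg (by omega)]
  rfl

end Evaluation

end LinfDistNet

open LinfDistNet

theorem exists_multi_layer_linf_net_certified_robust_general
    (d K n L : ℕ) (hL : 2 ≤ L) (hn : 1 ≤ n)
    (r : ℝ)
    (x : Fin n → (Fin d → ℝ)) (y : Fin n → Fin K)
    (hsep : ∀ i j : Fin n, y i ≠ y j → ‖x i - x j‖ > 2 * r)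
    (hsurj : ∀ j : Fin K, ∃ i : Fin n, y i = j) :
    ∃ (nl : ℕ → ℕ) (h0 : nl 0 = d) (hLK : nl L = K),
      (∀ l : ℕ, 1 ≤ l → l ≤ L - 1 → nl l ≤ (n + (L - 1) - 1) / (L - 1) + K + 2 * d) ∧
      ∃ F : ∀ l : ℕ, (Fin (nl l) → ℝ) → (Fin (nl (l + 1)) → ℝ),
        (∀ l, l < L → ∃ (w : Fin (nl (l + 1)) → (Fin (nl l) → ℝ)) (b : Fin (nl (l + 1)) → ℝ),
          ∀ (z : Fin (nl l) → ℝ) (i : Fin (nl (l + 1))), F l z i = ‖z - w i‖ + b i) ∧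
        ∀ k : Fin n, ∀ δ : Fin d → ℝ, ‖δ‖ ≤ r → ∀ j : Fin K, j ≠ y k →
          netComp nl F L (fun i => (x k + δ) (Fin.cast h0 i)) (Fin.cast hLK.symm (y k)) >
          netComp nl F L (fun i => (x k + δ) (Fin.cast h0 i)) (Fin.cast hLK.symm j) := by
  choose rep hrep using hsurj
  set m := (n + (L - 1) - 1) / (L - 1)
  have hnm : n ≤ (L - 1) * m := le_smul_ceilDiv (by omega : 0 < L - 1)
  set X := ∑ i, ‖x i‖ + r with hX
  refine ⟨width d K m L, width_zero, width_self (by omega), fun l _ _ => width_le l,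
    net x y rep hn X L, fun l _ => ⟨_, _, fun _ _ => rfl⟩, ?_⟩
  intro k δ hδ j hj
  have hr : 0 ≤ r := (norm_nonneg δ).trans hδ
  rcases isEmpty_or_nonempty (Fin d) with hd | hd
  · have := hsep (rep j) k (by rw [hrep]; exact hj)
    rw [Subsingleton.elim (x (rep j)) (x k), sub_self, norm_zero] at this
    linarith
  have hsum (i : Fin n) : ‖x i‖ ≤ ∑ i, ‖x i‖ :=
    single_le_sum (fun i _ => norm_nonneg (x i)) (mem_univ i)
  have hx (i : Fin n) : ‖x i‖ ≤ X := by linarith [hsum i]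
  have hz : ‖x k + δ‖ ≤ X := by linarith [norm_add_le (x k) δ, hsum k]
  rw [gt_iff_lt, netComp_net_apply hx hz hL, netComp_net_apply hx hz hL, sub_lt_sub_iff_left]
  calc minDist m y rep x (x k + δ) (y k) L ≤ ‖x k + δ - x k‖ := minDist_le (mem_seen_label hnm k)
    _ ≤ r := by rwa [add_sub_cancel_left]
    _ < minDist m y rep x (x k + δ) j L := lt_minDist_of_ne_label hrep hsep hδ hj

/-- Multi-layer extension of Theorem 1 (appendix of the paper): for any r-separated dataset
(w.r.t. ℓ∞) and any `L ≥ 2`, there exists an `L`-layer ℓ∞-distance net with input width `d`,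
output width `K`, and all hidden widths at most `⌈n/(L-1)⌉ + K + 2d`, achieving 100% certified
ℓ∞ robust accuracy on the dataset at perturbation level `ε = r`. -/
theorem exists_multi_layer_linf_net_certified_robust
    (d K n L : ℕ) (hL : 2 ≤ L) (hn : 1 ≤ n) (hK : 1 ≤ K)
    (r : ℝ) (hr : 0 ≤ r)
    (x : Fin n → (Fin d → ℝ)) (y : Fin n → Fin K)
    (hsep : ∀ i j : Fin n, y i ≠ y j → ‖x i - x j‖ > 2 * r)
    (hsurj : ∀ j : Fin K, ∃ i : Fin n, y i = j) :
    ∃ (nl : ℕ → ℕ) (h0 : nl 0 = d) (hLK : nl L = K),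
      (∀ l : ℕ, 1 ≤ l → l ≤ L - 1 → nl l ≤ (n + (L - 1) - 1) / (L - 1) + K + 2 * d) ∧
      ∃ F : ∀ l : ℕ, (Fin (nl l) → ℝ) → (Fin (nl (l + 1)) → ℝ),
        (∀ l, l < L → ∃ (w : Fin (nl (l + 1)) → (Fin (nl l) → ℝ)) (b : Fin (nl (l + 1)) → ℝ),
          ∀ (z : Fin (nl l) → ℝ) (i : Fin (nl (l + 1))), F l z i = ‖z - w i‖ + b i) ∧
        ∀ k : Fin n, ∀ δ : Fin d → ℝ, ‖δ‖ ≤ r → ∀ j : Fin K, j ≠ y k →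
          netComp nl F L (fun i => (x k + δ) (Fin.cast h0 i)) (Fin.cast hLK.symm (y k)) >
          netComp nl F L (fun i => (x k + δ) (Fin.cast h0 i)) (Fin.cast hLK.symm j) :=
  exists_multi_layer_linf_net_certified_robust_general d K n L hL hn r x y hsep hsurj
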